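/- Exponential reduction: Let γ(z) = ∑_{k=0}^n γ_k z^k be a polynomial state of dimension d = 2^b with degree n ≥ d−1, let Γ_j denote the d×d matrix whose columns are γ_j, γ_{j+1}, …, γ_{j+d−1} (with γ_k = 0 for k > n). There exists a unitary A ∈ U(d) such that (A W_b)† γ(z), where W_b = diag(1, z, z², …, z^{d−1}), is a polynomial state of degree at most n − (d−1), if and only if Γ_0† Γ_{n−(d−1)} is lower triangular. -/

import Mathlib

open Matrix

/-- The value at `z` of the vector-valued polynomial with coefficient vectors `γ k`,
of degree at most `n`. -/
noncomputable def polyVal {d : ℕ} (n : ℕ) (γ : ℕ → Fin d → ℂ) (z : ℂ) : Fin d → ℂ :=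
  fun i => ∑ k ∈ Finset.range (n + 1), γ k i * z ^ k

/-- The `d × d` coefficient matrix whose columns are `γ j, γ (j+1), …, γ (j+d-1)`. -/
def coeffMatrix {d : ℕ} (γ : ℕ → Fin d → ℂ) (j : ℕ) : Matrix (Fin d) (Fin d) ℂ :=
  Matrix.of fun i c => γ (j + (c : ℕ)) i

/-!
Put `U = Aᴴ` and `m = n - (d - 1)`. On the unit circle `z̄ = z⁻¹`, so the `x`-th coordinate of
`(A W_b)ᴴ γ(z)` is `z⁻ˣ (U γ(z))_x`; comparing coefficients, it is a polynomial of degree at most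
`m` exactly when `(U γ_k)_x = 0` outside the band `x ≤ k ≤ m + x`, and its norm is that of `γ(z)`.

Let `e_x` be the vectors with `(U v)_x = ⟪e_x, v⟫`. For unitary `U` the band condition says that
`e` is orthonormal with `e_x ⊥ γ_k` for `k < x` and `e_x ⊥ γ_{m+j}` for `j > x`; expanding
`⟪γ_k, γ_{m+j}⟫` in this basis shows that it vanishes for `k < j`, which is the triangularity of
`Γ_0ᴴ Γ_m`. Conversely, if `⟪γ_k, γ_{m+j}⟫ = 0` for `k < j`, then
`span {γ_k | k < c} ≤ B_c := (span {γ_{m+j} | j ≥ c})ᗮ` with dimensions at most `c` and at least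
`c`, so a complete flag fits between these two chains, and Gram–Schmidt along it produces `e`.
-/

open Polynomial Submodule Module Set InnerProductSpace

lemma setOf_norm_eq_one_infinite : {z : ℂ | ‖z‖ = 1}.Infinite :=
  infinite_of_injOn_mapsTo
    (Circle.coe_injective.comp_injOn (Circle.exp_injOn_Icc (by linarith [Real.pi_gt_three])))
    (fun t _ => Circle.norm_coe (Circle.exp t)) (Icc_infinite (zero_lt_one' ℝ))

lemma star_mul_self_of_norm_eq_one {z : ℂ} (hz : ‖z‖ = 1) : star z * z = 1 := by
  rw [mul_comm, Complex.star_def, Complex.mul_conj, Complex.normSq_eq_norm_sq, hz]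
  norm_num

lemma Polynomial.eq_X_pow_mul_iff_of_norm_eq_one {p q : ℂ[X]} {x : ℕ} :
    (∀ z : ℂ, ‖z‖ = 1 → star z ^ x * p.eval z = q.eval z) ↔ p = X ^ x * q := by
  constructor
  · intro h
    refine eq_of_infinite_eval_eq _ _ (setOf_norm_eq_one_infinite.mono fun z hz => ?_)
    rw [mem_ofPred_eq, eval_mul, eval_pow, eval_X, ← h z hz, ← mul_assoc, ← mul_pow,
      mul_comm z, star_mul_self_of_norm_eq_one hz, one_pow, one_mul]
  · rintro rfl z hz
    rw [eval_mul, eval_pow, eval_X, ← mul_assoc, ← mul_pow, star_mul_self_of_norm_eq_one hz,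
      one_pow, one_mul]

noncomputable def truncPoly (n : ℕ) (a : ℕ → ℂ) : ℂ[X] :=
  ∑ k ∈ Finset.range (n + 1), C (a k) * X ^ k

lemma eval_truncPoly (n : ℕ) (a : ℕ → ℂ) (z : ℂ) :
    (truncPoly n a).eval z = ∑ k ∈ Finset.range (n + 1), a k * z ^ k := by
  simp [truncPoly, eval_finsetSum]

lemma coeff_truncPoly (n : ℕ) (a : ℕ → ℂ) (k : ℕ) :
    (truncPoly n a).coeff k = if k ≤ n then a k else 0 := by
  simp [truncPoly]

lemma coeff_truncPoly_of_forall_gt_eq_zero {n : ℕ} {a : ℕ → ℂ} (ha : ∀ k, n < k → a k = 0)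
    (k : ℕ) : (truncPoly n a).coeff k = a k := by
  rw [coeff_truncPoly]
  split_ifs with hk
  · rfl
  · exact (ha k (not_le.mp hk)).symm

lemma truncPoly_eq_X_pow_mul_shift {n x : ℕ} {a : ℕ → ℂ} (ha : ∀ k, n < k → a k = 0)
    (hx : ∀ k < x, a k = 0) : truncPoly n a = X ^ x * truncPoly n (fun k => a (k + x)) := by
  ext k
  rw [coeff_X_pow_mul', coeff_truncPoly_of_forall_gt_eq_zero ha,
    coeff_truncPoly_of_forall_gt_eq_zero (fun j hj => ha _ (by omega))]
  split_ifs with hk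
  · rw [Nat.sub_add_cancel hk]
  · exact hx k (not_le.mp hk)

lemma coeff_X_pow_mul_truncPoly_eq_zero {n m x k : ℕ} {b : ℕ → ℂ} (hb : ∀ j, m < j → b j = 0)
    (hk : k < x ∨ m + x < k) : (X ^ x * truncPoly n b).coeff k = 0 := by
  rw [coeff_X_pow_mul', coeff_truncPoly]
  split_ifs <;> first | rfl | exact hb _ (by omega)

lemma star_mulVec_dotProduct_mulVec {ι : Type*} [Fintype ι] [DecidableEq ι] {𝕜 : Type*}
    [CommRing 𝕜] [StarRing 𝕜] {U : Matrix ι ι 𝕜} (hU : U ∈ unitaryGroup ι 𝕜) (v w : ι → 𝕜) :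
    star (U *ᵥ v) ⬝ᵥ (U *ᵥ w) = star v ⬝ᵥ w := by
  rw [star_mulVec, dotProduct_mulVec, vecMul_vecMul, ← star_eq_conjTranspose,
    mem_unitaryGroup_iff'.mp hU, vecMul_one]

lemma sum_norm_sq_mulVec {ι : Type*} [Fintype ι] [DecidableEq ι] {U : Matrix ι ι ℂ}
    (hU : U ∈ unitaryGroup ι ℂ) (v : ι → ℂ) : ∑ i, ‖(U *ᵥ v) i‖ ^ 2 = ∑ i, ‖v i‖ ^ 2 := by
  have hsum (w : ι → ℂ) : ((∑ i, ‖w i‖ ^ 2 : ℝ) : ℂ) = star w ⬝ᵥ w := by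
    simp [dotProduct, Complex.conj_mul']
  exact_mod_cast (hsum _).trans ((star_mulVec_dotProduct_mulVec hU v v).trans (hsum v).symm)

lemma diagonal_mem_unitaryGroup {ι : Type*} [Fintype ι] [DecidableEq ι] {w : ι → ℂ}
    (hw : ∀ i, ‖w i‖ = 1) : diagonal w ∈ unitaryGroup ι ℂ := by
  rw [mem_unitaryGroup_iff', star_eq_conjTranspose, diagonal_conjTranspose, diagonal_mul_diagonal]
  convert diagonal_one with i
  exact star_mul_self_of_norm_eq_one (hw i)

lemma conjTranspose_mem_unitaryGroup {ι : Type*} [Fintype ι] [DecidableEq ι] {U : Matrix ι ι ℂ}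
    (hU : U ∈ unitaryGroup ι ℂ) : Uᴴ ∈ unitaryGroup ι ℂ :=
  star_eq_conjTranspose U ▸ Unitary.star_mem hU

lemma conjTranspose_mul_diagonal_mulVec_apply {ι : Type*} [Fintype ι] [DecidableEq ι]
    (A : Matrix ι ι ℂ) (w v : ι → ℂ) (i : ι) :
    ((A * diagonal w)ᴴ *ᵥ v) i = star (w i) * (Aᴴ *ᵥ v) i := by
  rw [conjTranspose_mul, ← mulVec_mulVec, diagonal_conjTranspose, mulVec_diagonal, Pi.star_apply]

lemma mulVec_polyVal {d n : ℕ} (M : Matrix (Fin d) (Fin d) ℂ) (γ : ℕ → Fin d → ℂ) (z : ℂ) :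
    M *ᵥ polyVal n γ z = polyVal n (fun k => M *ᵥ γ k) z := by
  ext i
  simp only [polyVal, mulVec, dotProduct, Finset.mul_sum, Finset.sum_mul]
  rw [Finset.sum_comm]
  simp only [mul_assoc]

section Reduction

variable {d n : ℕ} {γ : ℕ → Fin d → ℂ}

lemma conjTranspose_mulVec_polyVal_eq_iff (A : Matrix (Fin d) (Fin d) ℂ) (γ' : ℕ → Fin d → ℂ) :
    (∀ z : ℂ, ‖z‖ = 1 →
      (A * diagonal (fun i : Fin d => z ^ (i : ℕ)))ᴴ *ᵥ polyVal n γ z = polyVal n γ' z) ↔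
    ∀ x : Fin d, truncPoly n (fun k => (Aᴴ *ᵥ γ k) x) = X ^ (x : ℕ) * truncPoly n (γ' · x) := by
  simp_rw [← eq_X_pow_mul_iff_of_norm_eq_one, eval_truncPoly, funext_iff,
    conjTranspose_mul_diagonal_mulVec_apply, mulVec_polyVal, star_pow, polyVal]
  exact ⟨fun h x z hz => h z hz x, fun h z hz x => h x z hz⟩

theorem exists_reduction_iff (hγ : ∀ k, n < k → γ k = 0)
    (hstate : ∀ z : ℂ, ‖z‖ = 1 → ∑ i : Fin d, ‖polyVal n γ z i‖ ^ 2 = 1) (m : ℕ) :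
    (∃ A ∈ unitaryGroup (Fin d) ℂ, ∃ γ' : ℕ → Fin d → ℂ,
        (∀ k : ℕ, m < k → γ' k = 0) ∧
        (∀ z : ℂ, ‖z‖ = 1 → ∑ i : Fin d, ‖polyVal n γ' z i‖ ^ 2 = 1) ∧
        (∀ z : ℂ, ‖z‖ = 1 →
          (A * diagonal (fun i : Fin d => z ^ (i : ℕ)))ᴴ *ᵥ polyVal n γ z = polyVal n γ' z)) ↔
      ∃ U ∈ unitaryGroup (Fin d) ℂ,
        ∀ (x : Fin d) (k : ℕ), k < x ∨ m + x < k → (U *ᵥ γ k) x = 0 := by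
  have hvanish (U : Matrix (Fin d) (Fin d) ℂ) (x : Fin d) (k : ℕ) (hk : n < k) :
      (U *ᵥ γ k) x = 0 := by
    rw [hγ k hk, mulVec_zero, Pi.zero_apply]
  constructor
  · rintro ⟨A, hA, γ', hγ', -, hid⟩
    refine ⟨Aᴴ, conjTranspose_mem_unitaryGroup hA, fun x k hk => ?_⟩
    rw [conjTranspose_mulVec_polyVal_eq_iff] at hid
    rw [← coeff_truncPoly_of_forall_gt_eq_zero (hvanish _ x) k, hid x]
    exact coeff_X_pow_mul_truncPoly_eq_zero (fun j hj => by rw [hγ' j hj, Pi.zero_apply]) hk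
  · rintro ⟨U, hU, hband⟩
    have hid : ∀ z : ℂ, ‖z‖ = 1 → (Uᴴ * diagonal (fun i : Fin d => z ^ (i : ℕ)))ᴴ *ᵥ
        polyVal n γ z = polyVal n (fun k x => (U *ᵥ γ (k + x)) x) z := by
      rw [conjTranspose_mulVec_polyVal_eq_iff, conjTranspose_conjTranspose]
      exact fun x => truncPoly_eq_X_pow_mul_shift (hvanish U x) fun k hk => hband x k (.inl hk)
    refine ⟨Uᴴ, conjTranspose_mem_unitaryGroup hU, _,
      fun k hk => funext fun x => hband x _ (.inr (by omega)), fun z hz => ?_, hid⟩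
    rw [← hid z hz, sum_norm_sq_mulVec, hstate z hz]
    exact conjTranspose_mem_unitaryGroup (Submonoid.mul_mem _ (conjTranspose_mem_unitaryGroup hU)
      (diagonal_mem_unitaryGroup fun i => by rw [norm_pow, hz, one_pow]))

end Reduction

theorem exists_seq_notMem_span_of_le_finrank {K V : Type*} [DivisionRing K] [AddCommGroup V]
    [Module K V] [FiniteDimensional K V] (p : ℕ → V) (B : ℕ → Submodule K V)
    (hpB : ∀ k, p k ∈ B (k + 1)) (d : ℕ) (hB : ∀ c ≤ d, c ≤ finrank K (B c)) :
    ∃ u : ℕ → V, ∀ c < d,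
      u c ∈ B (c + 1) ∧ u c ∉ span K (u '' Iio c) ∧ p c ∈ span K (u '' Iic c) := by
  induction d with
  | zero => exact ⟨0, fun c hc => absurd hc c.not_lt_zero⟩
  | succ d ih =>
    obtain ⟨u, hu⟩ := ih fun c hc => hB c (by omega)
    set S := span K (u '' Iio d) with hS_def
    have hS : finrank K S ≤ d := by
      classical
      rw [hS_def, ← Finset.coe_range, ← Finset.coe_image]
      exact (finrank_span_finset_le_card _).trans (Finset.card_image_le.trans_eq
        (Finset.card_range d))
    obtain ⟨v, hvB, hvS, hpv⟩ : ∃ v ∈ B (d + 1), v ∉ S ∧ p d ∈ span K (insert v (u '' Iio d)) := by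
      by_cases hp : p d ∈ S
      · have hBS : ¬ B (d + 1) ≤ S := fun h => by
          have := Submodule.finrank_mono h
          have := hB (d + 1) le_rfl
          omega
        obtain ⟨v, hvB, hvS⟩ := SetLike.not_le_iff_exists.mp hBS
        exact ⟨v, hvB, hvS, span_mono (subset_insert _ _) hp⟩
      · exact ⟨p d, hpB d, hp, subset_span (mem_insert _ _)⟩
    have himage : ∀ s ⊆ Iio d, Function.update u d v '' s = u '' s :=
      fun s hs => EqOn.image_eq fun i hi => Function.update_of_ne (hs hi).ne _ _
    refine ⟨Function.update u d v, fun c hc => ?_⟩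
    rcases Nat.lt_succ_iff_lt_or_eq.mp hc with hc | rfl
    · rw [Function.update_of_ne hc.ne, himage _ (Iio_subset_Iio hc.le),
        himage _ (Iic_subset_Iio.2 hc)]
      exact hu c hc
    · rw [Function.update_self, himage _ subset_rfl, ← Iio_insert, image_insert_eq,
        Function.update_self, himage _ subset_rfl]
      exact ⟨hvB, hvS, hpv⟩

section GramSchmidt

variable {𝕜 E : Type*} [RCLike 𝕜] [NormedAddCommGroup E] [InnerProductSpace 𝕜 E]

lemma InnerProductSpace.gramSchmidt_ne_zero_of_notMem_span {ι : Type*} [LinearOrder ι]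
    [LocallyFiniteOrderBot ι] [WellFoundedLT ι] {f : ι → E} {i : ι}
    (h : f i ∉ span 𝕜 (f '' Iio i)) : gramSchmidt 𝕜 f i ≠ 0 := by
  intro h0
  have := mem_span_gramSchmidt 𝕜 f (le_refl i)
  rw [← Iio_insert, image_insert_eq, h0, span_insert_zero, span_gramSchmidt_Iio] at this
  exact h this

theorem exists_orthonormal_inner_eq_zero [FiniteDimensional 𝕜 E] {d : ℕ}
    (hd : finrank 𝕜 E = d) (p q : ℕ → E) (hq : ∀ j, d ≤ j → q j = 0)
    (hpq : ∀ k j, k < j → ⟪p k, q j⟫_𝕜 = 0) :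
    ∃ e : Fin d → E, Orthonormal 𝕜 e ∧ (∀ (x : Fin d) (k : ℕ), k < x → ⟪e x, p k⟫_𝕜 = 0) ∧
      ∀ (x : Fin d) (j : ℕ), x < j → ⟪e x, q j⟫_𝕜 = 0 := by
  set B : ℕ → Submodule 𝕜 E := fun c => (span 𝕜 (q '' Ici c))ᗮ
  have hB : Monotone B := fun a b hab =>
    orthogonal_le (span_mono (image_mono (Ici_subset_Ici.2 hab)))
  have hpB : ∀ k, p k ∈ B (k + 1) := fun k =>
    isOrtho_iff_le.1 (isOrtho_span.2 <| by rintro _ rfl _ ⟨j, hj, rfl⟩; exact hpq k j hj)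
      (mem_span_singleton_self (p k))
  have hrank : ∀ c ≤ d, c ≤ finrank 𝕜 (B c) := by
    classical
    intro c hc
    have hle : span 𝕜 (q '' Ici c) ≤ span 𝕜 ((Finset.Ico c d).image q) := span_le.2 <| by
      rintro _ ⟨j, hj, rfl⟩
      by_cases hjd : j < d
      · exact subset_span (Finset.mem_image_of_mem q (Finset.mem_Ico.2 ⟨hj, hjd⟩))
      · rw [hq j (not_lt.1 hjd)]
        exact zero_mem _
    have := (Submodule.finrank_mono hle).trans ((finrank_span_finset_le_card _).trans
      (Finset.card_image_le.trans_eq (Nat.card_Ico c d)))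
    have := (span 𝕜 (q '' Ici c)).finrank_add_finrank_orthogonal
    rw [hd] at this
    change c ≤ finrank 𝕜 (span 𝕜 (q '' Ici c))ᗮ
    omega
  obtain ⟨u, hu⟩ := exists_seq_notMem_span_of_le_finrank p B hpB d hrank
  set e := gramSchmidtNormed 𝕜 u
  have he_mem : ∀ x, e x ∈ span 𝕜 (u '' Iic x) := fun x =>
    smul_mem _ _ (gramSchmidt_mem_span 𝕜 u le_rfl)
  have he_perp : ∀ x, span 𝕜 (u '' Iio x) ≤ (𝕜 ∙ e x)ᗮ := fun x =>
    span_le.2 <| image_subset_iff.2 fun i hi => mem_orthogonal_singleton_iff_inner_right.2 <| by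
      simp [e, gramSchmidtNormed, inner_smul_left, gramSchmidt_inv_triangular 𝕜 u hi]
  refine ⟨fun x => e x, ⟨fun x => ?_, fun x y hxy => ?_⟩, fun x k hk => ?_, fun x j hj => ?_⟩
  · exact norm_smul_inv_norm (gramSchmidt_ne_zero_of_notMem_span (hu x x.2).2.1)
  · simp [e, gramSchmidtNormed, inner_smul_left, inner_smul_right,
      gramSchmidt_orthogonal 𝕜 u (Fin.val_injective.ne hxy)]
  · have hpk : p k ∈ span 𝕜 (u '' Iio x) :=
      span_mono (image_mono (Iic_subset_Iio.2 hk)) (hu k (hk.trans x.2)).2.2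
    exact mem_orthogonal_singleton_iff_inner_right.1 (he_perp x hpk)
  · have hspan : span 𝕜 (u '' Iic x) ≤ B (x + 1) := span_le.2 <| by
      rintro _ ⟨c, hc, rfl⟩
      exact hB (Nat.succ_le_succ hc) (hu c (lt_of_le_of_lt hc x.2)).1
    exact inner_left_of_mem_orthogonal (subset_span (mem_image_of_mem q hj)) (hspan (he_mem x))

end GramSchmidt

section Unitary

variable {ι : Type*} [Fintype ι] {e : ι → EuclideanSpace ℂ ι}

lemma of_star_mulVec_apply (v : ι → ℂ) (x : ι) :
    (of (fun x i => star (e x i)) *ᵥ v) x = ⟪e x, WithLp.toLp 2 v⟫_ℂ := by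
  simp [mulVec, dotProduct, EuclideanSpace.inner_eq_star_dotProduct, mul_comm]

lemma of_star_mem_unitaryGroup [DecidableEq ι] (he : Orthonormal ℂ e) :
    of (fun x i => star (e x i)) ∈ unitaryGroup ι ℂ := by
  rw [mem_unitaryGroup_iff]
  ext x y
  rw [mul_apply, one_apply, ← orthonormal_iff_ite.1 he x y, EuclideanSpace.inner_eq_star_dotProduct]
  simp [dotProduct, mul_comm]

end Unitary

theorem exists_unitary_band_iff {d m : ℕ} (γ : ℕ → Fin d → ℂ) (hγ : ∀ k, m + d ≤ k → γ k = 0) :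
    (∃ U ∈ unitaryGroup (Fin d) ℂ,
        ∀ (x : Fin d) (k : ℕ), k < x ∨ m + x < k → (U *ᵥ γ k) x = 0) ↔
      ∀ k j, k < j → star (γ k) ⬝ᵥ γ (m + j) = 0 := by
  constructor
  · rintro ⟨U, hU, hband⟩ k j hkj
    rw [← star_mulVec_dotProduct_mulVec hU]
    refine Finset.sum_eq_zero fun x _ => ?_
    rcases lt_or_ge k x with hkx | hxk
    · rw [Pi.star_apply, hband x k (.inl hkx), star_zero, zero_mul]
    · rw [hband x (m + j) (.inr (by omega)), mul_zero]
  · intro h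
    obtain ⟨e, he, hp, hq⟩ := exists_orthonormal_inner_eq_zero finrank_euclideanSpace_fin
      (fun k => WithLp.toLp 2 (γ k)) (fun j => WithLp.toLp 2 (γ (m + j)))
      (fun j hj => by rw [hγ _ (by omega), WithLp.toLp_zero])
      (fun k j hkj => by rw [EuclideanSpace.inner_toLp_toLp, dotProduct_comm, h k j hkj])
    refine ⟨of fun x i => star (e x i), of_star_mem_unitaryGroup he, fun x k hk => ?_⟩
    rw [of_star_mulVec_apply]
    rcases hk with hk | hk
    · exact hp x k hk
    · obtain ⟨j, rfl⟩ : ∃ j, k = m + j := ⟨k - m, by omega⟩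
      exact hq x j (by omega)

lemma conjTranspose_coeffMatrix_mul_apply {d : ℕ} (γ : ℕ → Fin d → ℂ) (a b : ℕ) (i j : Fin d) :
    ((coeffMatrix γ a)ᴴ * coeffMatrix γ b) i j = star (γ (a + i)) ⬝ᵥ γ (b + j) :=
  rfl

lemma coeffMatrix_lowerTriangular_iff {d m : ℕ} (γ : ℕ → Fin d → ℂ)
    (hγ : ∀ k, m + d ≤ k → γ k = 0) :
    (∀ i j : Fin d, i < j → ((coeffMatrix γ 0)ᴴ * coeffMatrix γ m) i j = 0) ↔
      ∀ k j, k < j → star (γ k) ⬝ᵥ γ (m + j) = 0 := by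
  simp_rw [conjTranspose_coeffMatrix_mul_apply, zero_add]
  refine ⟨fun h k j hkj => ?_, fun h i j hij => h i j hij⟩
  by_cases hj : j < d
  · exact h ⟨k, hkj.trans hj⟩ ⟨j, hj⟩ hkj
  · rw [hγ (m + j) (by omega), dotProduct_zero]

theorem exponential_reduction_general (d n : ℕ) (γ : ℕ → Fin d → ℂ) (hγdeg : ∀ k : ℕ, n < k → γ k = 0)
    (hstate : ∀ z : ℂ, ‖z‖ = 1 → ∑ i : Fin d, ‖polyVal n γ z i‖ ^ 2 = 1) :
    (∃ A ∈ Matrix.unitaryGroup (Fin d) ℂ, ∃ γ' : ℕ → Fin d → ℂ,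
        (∀ k : ℕ, n - (d - 1) < k → γ' k = 0) ∧
        (∀ z : ℂ, ‖z‖ = 1 →
          ∑ i : Fin d, ‖polyVal n γ' z i‖ ^ 2 = 1) ∧
        (∀ z : ℂ, ‖z‖ = 1 →
          ((A * Matrix.diagonal (fun i : Fin d => z ^ (i : ℕ)))ᴴ).mulVec (polyVal n γ z) =
            polyVal n γ' z)) ↔
      (∀ i j : Fin d, i < j → ((coeffMatrix γ 0)ᴴ * coeffMatrix γ (n - (d - 1))) i j = 0) := by
  have hγ : ∀ k, n - (d - 1) + d ≤ k → γ k = 0 := fun k hk => by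
    rcases d.eq_zero_or_pos with rfl | hd
    · exact Subsingleton.elim _ _
    · exact hγdeg k (by omega)
  rw [exists_reduction_iff hγdeg hstate, exists_unitary_band_iff γ hγ,
    coeffMatrix_lowerTriangular_iff γ hγ]

theorem exponential_reduction (b d n : ℕ) (hd : d = 2 ^ b) (hn : d - 1 ≤ n)
    (γ : ℕ → Fin d → ℂ) (hγdeg : ∀ k : ℕ, n < k → γ k = 0)
    (hstate : ∀ z : ℂ, ‖z‖ = 1 → ∑ i : Fin d, ‖polyVal n γ z i‖ ^ 2 = 1) :
    (∃ A ∈ Matrix.unitaryGroup (Fin d) ℂ, ∃ γ' : ℕ → Fin d → ℂ,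
        (∀ k : ℕ, n - (d - 1) < k → γ' k = 0) ∧
        (∀ z : ℂ, ‖z‖ = 1 →
          ∑ i : Fin d, ‖polyVal n γ' z i‖ ^ 2 = 1) ∧
        (∀ z : ℂ, ‖z‖ = 1 →
          ((A * Matrix.diagonal (fun i : Fin d => z ^ (i : ℕ)))ᴴ).mulVec (polyVal n γ z) =
            polyVal n γ' z)) ↔
      (∀ i j : Fin d, i < j → ((coeffMatrix γ 0)ᴴ * coeffMatrix γ (n - (d - 1))) i j = 0) :=
  exponential_reduction_general d n γ hγdeg hstate
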